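/- arXiv:0910.4504 — 2 statements merged into one kernel-verified Lean document; each statement's English description precedes it below -/
import Mathlib

section
/- Let ψ₁, ψ₂ ∈ ℝ⁴ be linearly independent real unit vectors, let p ∈ (0,1), and set ρ = p ψ₁ψ₁ᵀ + (1−p) ψ₂ψ₂ᵀ, r_{ij} = ψᵢᵀ J ψ_j and χ = r₁₁r₂₂ − r₁₂². If χ < 0, then the concurrence satisfies C(ρ) = |p r₁₁ + (1−p) r₂₂| = |tr(Jρ)|. -/
open Matrix Polynomial

noncomputable section

/-- `J = σ_y ⊗ σ_y` as a complex 4×4 matrix (standard product basis). -/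
def Jc : Matrix (Fin 4) (Fin 4) ℂ :=
  !![0, 0, 0, -1; 0, 0, 1, 0; 0, 1, 0, 0; -1, 0, 0, 0]

/-- `J = σ_y ⊗ σ_y` as a real 4×4 matrix (standard product basis). -/
def Jr : Matrix (Fin 4) (Fin 4) ℝ :=
  !![0, 0, 0, -1; 0, 0, 1, 0; 0, 1, 0, 0; -1, 0, 0, 0]

/-- The spin-flipped matrix `ρ̃ = J ρ̄ J`. -/
def spinFlip (ρ : Matrix (Fin 4) (Fin 4) ℂ) : Matrix (Fin 4) (Fin 4) ℂ :=
  Jc * ρ.map (starRingEnd ℂ) * Jc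

/-- The concurrence of a two-qubit density matrix `ρ`:
`max (0, √μ₁ − √μ₂ − √μ₃ − √μ₄)` where `μ₁ ≥ μ₂ ≥ μ₃ ≥ μ₄` are the (real,
nonnegative) eigenvalues of `ρ ρ̃` listed with multiplicity. -/
def concurrence (ρ : Matrix (Fin 4) (Fin 4) ℂ) : ℝ :=
  let l : List ℝ :=
    (((ρ * spinFlip ρ).charpoly.roots.map Complex.re).sort (· ≤ ·))
  max 0 (Real.sqrt (l.getD 3 0) - Real.sqrt (l.getD 2 0) -
    Real.sqrt (l.getD 1 0) - Real.sqrt (l.getD 0 0))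

/-- The (complex) density matrix of the pure state given by a real 4-vector `ψ`,
namely `ψ ψᵀ`. -/
def pureState (ψ : Fin 4 → ℝ) : Matrix (Fin 4) (Fin 4) ℂ :=
  (Matrix.vecMulVec ψ ψ).map Complex.ofReal

end

/-! The state `ρ` is the real matrix `S = Φᵀ D Φ`, where `Φ` has rows `ψ₁, ψ₂` and
`D = diag(p, 1 - p)`. Then `ρ ρ̃ = (S J)²` and `S J = Φᵀ (D Φ J)`, so by Sylvester's identity
`ρ ρ̃` has the eigenvalues of `M²` together with `0, 0`, where `M = D Φ J Φᵀ = D (r_ij)` is `2 × 2`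
with trace `p r₁₁ + (1 - p) r₂₂ = tr (J ρ)` and determinant `p (1 - p) χ < 0`. Hence `M` has real
eigenvalues `λ₁, λ₂` of opposite signs, `ρ ρ̃` has eigenvalues `λ₁², λ₂², 0, 0`, and
`C(ρ) = | |λ₁| - |λ₂| | = |λ₁ + λ₂|`. -/

namespace Matrix

variable {R : Type*} [CommRing R] {m n : Type*} [Fintype m] [Fintype n] [DecidableEq m]
  [DecidableEq n]

theorem charpoly_sq_mul_comm_of_le (A : Matrix m n R) (B : Matrix n m R)
    (hle : Fintype.card n ≤ Fintype.card m) :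
    ((A * B) ^ 2).charpoly = X ^ (Fintype.card m - Fintype.card n) * ((B * A) ^ 2).charpoly := by
  have hAB : (A * B) ^ 2 = A * (B * A * B) := by simp only [sq, Matrix.mul_assoc]
  have hBA : B * A * B * A = (B * A) ^ 2 := by simp only [sq, Matrix.mul_assoc]
  rw [hAB, charpoly_mul_comm_of_le _ _ hle, hBA]

theorem charpoly_sq_fin_two [Nontrivial R] (M : Matrix (Fin 2) (Fin 2) R) {a b : R}
    (hadd : a + b = M.trace) (hmul : a * b = M.det) :
    (M ^ 2).charpoly = (X - C (a ^ 2)) * (X - C (b ^ 2)) := by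
  have htr : (M ^ 2).trace = a ^ 2 + b ^ 2 := by
    have : (M ^ 2).trace = M.trace ^ 2 - 2 * M.det := by
      simp only [sq, trace_fin_two, mul_apply, Fin.sum_univ_two, det_fin_two]; ring
    rw [this, ← hadd, ← hmul]; ring
  rw [charpoly_fin_two, htr, det_pow, ← hmul]
  simp only [C_add, C_mul, C_pow]
  ring

end Matrix

theorem exists_add_eq_mul_eq_of_four_mul_le_sq {τ δ : ℝ} (h : 4 * δ ≤ τ ^ 2) :
    ∃ a b : ℝ, a + b = τ ∧ a * b = δ := by
  set s := √(τ ^ 2 - 4 * δ)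
  have hs : s ^ 2 = τ ^ 2 - 4 * δ := Real.sq_sqrt (by linarith)
  exact ⟨(τ + s) / 2, (τ - s) / 2, by ring, by linear_combination (-1 / 4 : ℝ) * hs⟩

theorem abs_sqrt_sq_sub_sqrt_sq_of_mul_nonpos {a b : ℝ} (hab : a * b ≤ 0) :
    |√(a ^ 2) - √(b ^ 2)| = |a + b| := by
  rw [Real.sqrt_sq_eq_abs, Real.sqrt_sq_eq_abs, ← sq_eq_sq₀ (abs_nonneg _) (abs_nonneg _),
    sq_abs, sq_abs]
  linear_combination (sq_abs a) + sq_abs b + 2 * abs_mul a b - 2 * abs_of_nonpos hab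

theorem concurrence_eq_of_charpoly {ρ : Matrix (Fin 4) (Fin 4) ℂ} {x y : ℝ} (hx : 0 ≤ x)
    (hy : 0 ≤ y) (h : (ρ * spinFlip ρ).charpoly = X ^ 2 * ((X - C (x : ℂ)) * (X - C (y : ℂ)))) :
    concurrence ρ = |√x - √y| := by
  wlog hyx : y ≤ x generalizing x y
  · rw [abs_sub_comm]
    exact this hy hx (by rw [h, mul_comm (X - _)]) (by linarith)
  have hroots : (ρ * spinFlip ρ).charpoly.roots = 0 ::ₘ 0 ::ₘ (y : ℂ) ::ₘ {(x : ℂ)} := by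
    have hne : (X - C (x : ℂ)) * (X - C (y : ℂ)) ≠ 0 :=
      ((monic_X_sub_C _).mul (monic_X_sub_C _)).ne_zero
    rw [h, roots_mul (mul_ne_zero (pow_ne_zero 2 X_ne_zero) hne), roots_mul hne, roots_X_pow,
      roots_X_sub_C, roots_X_sub_C, two_nsmul, Multiset.singleton_add, Multiset.singleton_add, Multiset.cons_add,
      Multiset.singleton_add]
    exact congrArg _ (congrArg _ (Multiset.pair_comm _ _))
  have hsort : ((ρ * spinFlip ρ).charpoly.roots.map Complex.re).sort (· ≤ ·) = [0, 0, y, x] := by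
    rw [hroots]
    simp only [Multiset.map_cons, Multiset.map_singleton, Complex.zero_re, Complex.ofReal_re]
    rw [Multiset.sort_cons, Multiset.sort_cons, Multiset.sort_cons, Multiset.sort_singleton]
    all_goals simp [hx, hy, hyx]
  have hsqrt : 0 ≤ √x - √y := sub_nonneg.mpr (Real.sqrt_le_sqrt hyx)
  rw [concurrence]
  simp only [hsort, List.getD_eq_getElem?_getD, List.getElem?_cons_succ, List.getElem?_cons_zero,
    Option.getD_some, Real.sqrt_zero, sub_zero]
  rw [abs_of_nonneg hsqrt, max_eq_right hsqrt]

theorem Jc_eq_map_Jr : Jc = Jr.map Complex.ofRealHom := by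
  ext i j
  fin_cases i <;> fin_cases j <;> simp [Jc, Jr]

theorem mul_spinFlip_map_ofReal (S : Matrix (Fin 4) (Fin 4) ℝ) :
    S.map Complex.ofRealHom * spinFlip (S.map Complex.ofRealHom) =
      ((S * Jr) ^ 2).map Complex.ofRealHom := by
  have hconj : (S.map Complex.ofRealHom).map (starRingEnd ℂ) = S.map Complex.ofRealHom := by
    ext i j; simp
  rw [spinFlip, hconj, Jc_eq_map_Jr, ← Matrix.map_mul, ← Matrix.map_mul, ← Matrix.map_mul, sq]
  simp only [Matrix.mul_assoc]

theorem trace_Jc_mul_map_ofReal (S : Matrix (Fin 4) (Fin 4) ℝ) :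
    (Jc * S.map Complex.ofRealHom).trace = ((S * Jr).trace : ℂ) := by
  rw [Jc_eq_map_Jr, ← Matrix.map_mul, ← AddMonoidHom.map_trace, trace_mul_comm]
  rfl

theorem concurrence_map_ofReal_of_mul_Jr_eq {S : Matrix (Fin 4) (Fin 4) ℝ}
    {A : Matrix (Fin 4) (Fin 2) ℝ} {B : Matrix (Fin 2) (Fin 4) ℝ} (hS : S * Jr = A * B)
    (hdet : (B * A).det < 0) :
    concurrence (S.map Complex.ofRealHom) = |(B * A).trace| := by
  obtain ⟨a, b, hadd, hmul⟩ := exists_add_eq_mul_eq_of_four_mul_le_sq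
    (show 4 * (B * A).det ≤ (B * A).trace ^ 2 by nlinarith [sq_nonneg (B * A).trace])
  have hcp : (S.map Complex.ofRealHom * spinFlip (S.map Complex.ofRealHom)).charpoly =
      X ^ 2 * ((X - C ((a ^ 2 : ℝ) : ℂ)) * (X - C ((b ^ 2 : ℝ) : ℂ))) := by
    rw [mul_spinFlip_map_ofReal, charpoly_map, hS, charpoly_sq_mul_comm_of_le _ _ (by simp),
      charpoly_sq_fin_two _ hadd hmul]
    simp
  rw [concurrence_eq_of_charpoly (sq_nonneg a) (sq_nonneg b) hcp,
    abs_sqrt_sq_sub_sqrt_sq_of_mul_nonpos (hmul ▸ hdet.le), hadd]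

theorem smul_pureState_add_smul_pureState (ψ₁ ψ₂ : Fin 4 → ℝ) (p q : ℝ) :
    p • pureState ψ₁ + q • pureState ψ₂ =
      ((of ![ψ₁, ψ₂])ᵀ * diagonal ![p, q] * of ![ψ₁, ψ₂]).map Complex.ofRealHom := by
  ext i j
  simp only [pureState, Matrix.add_apply, Matrix.smul_apply, map_apply, vecMulVec_apply, mul_apply,
    transpose_apply, of_apply, Fin.sum_univ_two, cons_val_zero, cons_val_one, cons_val_fin_one,
    diagonal_apply_eq, diagonal_apply_ne, ne_eq, zero_ne_one, one_ne_zero, not_false_eq_true,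
    Complex.real_smul, Complex.ofRealHom_eq_coe]
  push_cast
  ring

theorem rank_two_chi_neg_general
    (ψ₁ ψ₂ : Fin 4 → ℝ)
    (p : ℝ) (hp : p ∈ Set.Ioo (0 : ℝ) 1)
    (ρ : Matrix (Fin 4) (Fin 4) ℂ)
    (hρ : ρ = p • pureState ψ₁ + (1 - p) • pureState ψ₂)
    (r₁₁ r₂₂ r₁₂ χ : ℝ)
    (hr₁₁ : r₁₁ = ψ₁ ⬝ᵥ (Jr *ᵥ ψ₁)) (hr₂₂ : r₂₂ = ψ₂ ⬝ᵥ (Jr *ᵥ ψ₂))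
    (hr₁₂ : r₁₂ = ψ₁ ⬝ᵥ (Jr *ᵥ ψ₂))
    (hχ : χ = r₁₁ * r₂₂ - r₁₂ ^ 2) (hχneg : χ < 0) :
    concurrence ρ = |p * r₁₁ + (1 - p) * r₂₂| ∧
    |p * r₁₁ + (1 - p) * r₂₂| = ‖Matrix.trace (Jc * ρ)‖ := by
  set Φ : Matrix (Fin 2) (Fin 4) ℝ := of ![ψ₁, ψ₂]
  set D : Matrix (Fin 2) (Fin 2) ℝ := diagonal ![p, 1 - p]
  have hρS : ρ = (Φᵀ * D * Φ).map Complex.ofRealHom :=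
    hρ.trans (smul_pureState_add_smul_pureState ψ₁ ψ₂ p (1 - p))
  have hS : Φᵀ * D * Φ * Jr = Φᵀ * (D * Φ * Jr) := by simp only [Matrix.mul_assoc]
  have hM : D * Φ * Jr * Φᵀ = !![p * r₁₁, p * r₁₂; (1 - p) * r₁₂, (1 - p) * r₂₂] := by
    ext i j
    fin_cases i <;> fin_cases j <;>
      simp only [hr₁₁, hr₂₂, hr₁₂, D, Φ, Jr, mul_apply, mulVec, dotProduct, Fin.sum_univ_two,
        Fin.sum_univ_four, of_apply, transpose_apply, cons_val', cons_val_fin_one, cons_val,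
        cons_val_zero, cons_val_one, diagonal_apply_eq, diagonal_apply_ne, ne_eq, zero_ne_one,
        one_ne_zero, not_false_eq_true, Fin.isValue, Fin.zero_eta, Fin.mk_one] <;> ring
  have htr : (D * Φ * Jr * Φᵀ).trace = p * r₁₁ + (1 - p) * r₂₂ := by rw [hM, trace_fin_two_of]
  have hdet : (D * Φ * Jr * Φᵀ).det < 0 := by
    have hpq : 0 < p * (1 - p) := mul_pos hp.1 (sub_pos.mpr hp.2)
    rw [hM, det_fin_two_of]
    linear_combination (mul_neg_of_pos_of_neg hpq hχneg) - p * (1 - p) * hχ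
  constructor
  · rw [hρS, concurrence_map_ofReal_of_mul_Jr_eq hS hdet, htr]
  · rw [hρS, trace_Jc_mul_map_ofReal, hS, trace_mul_comm, htr, Complex.norm_real, Real.norm_eq_abs]

/-- Rank-2 mixtures of real pure states with `χ = r₁₁r₂₂ − r₁₂² < 0`:
the concurrence is `|p r₁₁ + (1−p) r₂₂| = |tr(Jρ)|`. -/
theorem rank_two_chi_neg
    (ψ₁ ψ₂ : Fin 4 → ℝ) (hind : LinearIndependent ℝ ![ψ₁, ψ₂])
    (h₁ : ∑ i, ψ₁ i ^ 2 = 1) (h₂ : ∑ i, ψ₂ i ^ 2 = 1)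
    (p : ℝ) (hp : p ∈ Set.Ioo (0 : ℝ) 1)
    (ρ : Matrix (Fin 4) (Fin 4) ℂ)
    (hρ : ρ = p • pureState ψ₁ + (1 - p) • pureState ψ₂)
    (r₁₁ r₂₂ r₁₂ χ : ℝ)
    (hr₁₁ : r₁₁ = ψ₁ ⬝ᵥ (Jr *ᵥ ψ₁)) (hr₂₂ : r₂₂ = ψ₂ ⬝ᵥ (Jr *ᵥ ψ₂))
    (hr₁₂ : r₁₂ = ψ₁ ⬝ᵥ (Jr *ᵥ ψ₂))
    (hχ : χ = r₁₁ * r₂₂ - r₁₂ ^ 2) (hχneg : χ < 0) :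
    concurrence ρ = |p * r₁₁ + (1 - p) * r₂₂| ∧
    |p * r₁₁ + (1 - p) * r₂₂| = ‖Matrix.trace (Jc * ρ)‖ :=
  rank_two_chi_neg_general ψ₁ ψ₂ p hp ρ hρ r₁₁ r₂₂ r₁₂ χ hr₁₁ hr₂₂ hr₁₂ hχ hχneg
end

section
/- Let ψ₁, ψ₂, ψ₃, ψ₄ ∈ ℝ⁴ be linearly independent real unit vectors and let (p₁, p₂, p₃, p₄) be a probability vector with all pᵢ > 0 such that Σᵢ pᵢ C(ψᵢψᵢᵀ) > 0. Then the mixture ρ = Σᵢ pᵢ ψᵢψᵢᵀ is strictly suboptimal: C(ρ) < Σᵢ pᵢ C(ψᵢψᵢᵀ). In particular, there is no quadruple of linearly independent real pure states, at least one of which is entangled, all of whose mixtures are optimally entangled. -/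
open Matrix Polynomial

/-!
A real mixture is `ρ = V Vᵀ`, where `V` has columns `√pᵢ ψᵢ`, so `ρ ρ̃ = V Vᵀ J V Vᵀ J` has the
characteristic polynomial of `τ²`, with `τ = Vᵀ J V` real symmetric. Hence
`C(ρ) = max(0, 2|λ| − Σ|λⱼ|)` for an eigenvalue `λ` of `τ`, while the diagonal entries of `τ` are
`pᵢ ψᵢᵀ J ψᵢ = ± pᵢ C(ψᵢ)`, so `Σ pᵢ C(ψᵢ) = Σ |τᵢᵢ| ≥ |tr τ| = |Σ λⱼ|`. Linear independence gives
`det τ = det(V)² det J > 0`: the four eigenvalues are nonzero and an even number of them are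
negative, so `λ` shares its sign with another eigenvalue, which makes `2|λ| − Σ|λⱼ| < |Σ λⱼ|`.
-/

lemma Finset.prod_nonpos_of_odd_card {ι : Type*} {s : Finset ι} {f : ι → ℝ} (hs : Odd s.card)
    (hf : ∀ i ∈ s, f i ≤ 0) : ∏ i ∈ s, f i ≤ 0 := by
  have h := Finset.prod_nonneg fun i hi => neg_nonneg.mpr (hf i hi)
  rw [Finset.prod_neg, hs.neg_one_pow] at h
  linarith

section

variable {ι : Type*} [Fintype ι] [DecidableEq ι]

lemma exists_ne_mul_pos_of_prod_pos (hcard : Even (Fintype.card ι)) {E : ι → ℝ}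
    (hE : 0 < ∏ j, E j) (i : ι) : ∃ j ≠ i, 0 < E i * E j := by
  by_contra! h
  have hi : E i ≠ 0 := Finset.prod_ne_zero_iff.mp hE.ne' i (Finset.mem_univ i)
  have hodd : Odd (Finset.univ.erase i).card := by
    rw [Finset.card_erase_of_mem (Finset.mem_univ i)]
    exact Nat.Even.sub_odd (Fintype.card_pos_iff.mpr ⟨i⟩) hcard odd_one
  have hpos : 0 < ∏ j, E i * E j := by
    rw [Finset.prod_mul_distrib, Finset.prod_const]
    exact mul_pos (hcard.pow_pos hi) hE
  have hnonpos : ∏ j, E i * E j ≤ 0 := by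
    rw [← Finset.mul_prod_erase _ _ (Finset.mem_univ i)]
    exact mul_nonpos_of_nonneg_of_nonpos (mul_self_nonneg _)
      (Finset.prod_nonpos_of_odd_card hodd fun j hj => h j (Finset.ne_of_mem_erase hj))
  linarith

lemma two_mul_abs_sub_sum_abs_lt_abs_sum (hcard : Even (Fintype.card ι)) {E : ι → ℝ}
    (hE : 0 < ∏ j, E j) (i : ι) : 2 * |E i| - ∑ j, |E j| < |∑ j, E j| := by
  obtain ⟨j, hji, hij⟩ := exists_ne_mul_pos_of_prod_pos hcard hE i
  have hj : j ∈ Finset.univ.erase i := Finset.mem_erase.mpr ⟨hji, Finset.mem_univ j⟩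
  have split : ∀ f : ι → ℝ, ∑ k, f k = f i + f j + ∑ k ∈ (Finset.univ.erase i).erase j, f k :=
    fun f => by rw [← Finset.add_sum_erase _ _ (Finset.mem_univ i),
      ← Finset.add_sum_erase _ _ hj, add_assoc]
  have hsame : |E i + E j| = |E i| + |E j| := by
    rcases pos_and_pos_or_neg_and_neg_of_mul_pos hij with ⟨h1, h2⟩ | ⟨h1, h2⟩
    · exact (abs_add_eq_add_abs_iff _ _).mpr (Or.inl ⟨h1.le, h2.le⟩)
    · exact (abs_add_eq_add_abs_iff _ _).mpr (Or.inr ⟨h1.le, h2.le⟩)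
  have hj0 : 0 < |E j| := abs_pos.mpr (right_ne_zero_of_mul hij.ne')
  have hrest := Finset.abs_sum_le_sum_abs E ((Finset.univ.erase i).erase j)
  have htri := abs_sub_abs_le_abs_add (E i + E j) (∑ k ∈ (Finset.univ.erase i).erase j, E k)
  rw [split E, split fun k => |E k|]
  linarith

end

lemma Jc_eq_map_ofReal : Jc = Jr.map Complex.ofReal := by
  ext i j
  fin_cases i <;> fin_cases j <;> simp [Jc, Jr]

lemma Jr_transpose : Jrᵀ = Jr := by
  ext i j
  fin_cases i <;> fin_cases j <;> simp [Jr]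

lemma det_Jr : Jr.det = 1 := by
  simp [Jr, det_succ_row_zero, Fin.sum_univ_succ, Fin.succAbove]
  norm_num

lemma map_ofReal_mul {m n o : Type*} [Fintype n] (A : Matrix m n ℝ) (B : Matrix n o ℝ) :
    (A * B).map Complex.ofReal = A.map Complex.ofReal * B.map Complex.ofReal :=
  Matrix.map_mul (f := Complex.ofRealHom)

lemma spinFlip_map_ofReal (A : Matrix (Fin 4) (Fin 4) ℝ) :
    spinFlip (A.map Complex.ofReal) = (Jr * A * Jr).map Complex.ofReal := by
  rw [spinFlip, Matrix.map_map, Jc_eq_map_ofReal, map_ofReal_mul, map_ofReal_mul]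
  congr 2
  ext i j
  exact Complex.conj_ofReal _

lemma charpoly_mul_spinFlip_map_ofReal (V : Matrix (Fin 4) (Fin 4) ℝ) :
    ((V * Vᵀ).map Complex.ofReal * spinFlip ((V * Vᵀ).map Complex.ofReal)).charpoly =
      ((Vᵀ * Jr * V) ^ 2).charpoly.map Complex.ofRealHom := by
  have hreal : (V * Vᵀ * (Jr * (V * Vᵀ) * Jr)).charpoly = ((Vᵀ * Jr * V) ^ 2).charpoly := by
    rw [show V * Vᵀ * (Jr * (V * Vᵀ) * Jr) = V * (Vᵀ * Jr * V * Vᵀ * Jr) by noncomm_ring,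
      charpoly_mul_comm, sq]
    noncomm_ring
  rw [spinFlip_map_ofReal, ← map_ofReal_mul, ← hreal]
  exact Matrix.charpoly_map _ Complex.ofRealHom

lemma Matrix.IsHermitian.charpoly_pow {𝕜 n : Type*} [RCLike 𝕜] [Fintype n] [DecidableEq n]
    {A : Matrix n n 𝕜} (hA : A.IsHermitian) (k : ℕ) :
    (A ^ k).charpoly = ∏ i, (X - C ((hA.eigenvalues i : 𝕜) ^ k)) := by
  conv_lhs => rw [hA.spectral_theorem, ← map_pow, Unitary.conjStarAlgAut_apply,
    charpoly_mul_comm, ← mul_assoc]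
  simp [charpoly_diagonal, diagonal_pow]

lemma concurrence_eq_of_roots (ρ : Matrix (Fin 4) (Fin 4) ℂ) (μ : Fin 4 → ℝ)
    (h : (ρ * spinFlip ρ).charpoly.roots.map Complex.re = Finset.univ.val.map fun i => μ i ^ 2) :
    ∃ i, (∀ j, |μ j| ≤ |μ i|) ∧ concurrence ρ = max 0 (2 * |μ i| - ∑ j, |μ j|) := by
  set l := ((ρ * spinFlip ρ).charpoly.roots.map Complex.re).sort (· ≤ ·) with hl_def
  have hl : (l : Multiset ℝ) = Finset.univ.val.map fun i => μ i ^ 2 := by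
    rw [hl_def, Multiset.sort_eq, h]
  obtain ⟨a, b, c, d, habcd⟩ : ∃ a b c d, l = [a, b, c, d] := by
    rw [← List.length_eq_four, ← Multiset.coe_card, hl]
    simp
  have hmem : ∀ x, x ∈ l ↔ ∃ i, μ i ^ 2 = x := by
    intro x
    rw [← Multiset.mem_coe, hl]
    simp only [Multiset.mem_map, Finset.mem_val, Finset.mem_univ, true_and]
  have hsorted : [a, b, c, d].Pairwise (· ≤ ·) := habcd ▸ Multiset.pairwise_sort _ _
  have hle : ∀ x ∈ l, x ≤ d := by
    rw [habcd]
    simp only [List.mem_cons, List.not_mem_nil, or_false]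
    rintro x (rfl | rfl | rfl | rfl)
    · exact List.rel_of_pairwise_cons hsorted (by simp)
    · exact List.rel_of_pairwise_cons hsorted.of_cons (by simp)
    · exact List.rel_of_pairwise_cons hsorted.of_cons.of_cons (by simp)
    · exact le_rfl
  obtain ⟨i, hi⟩ := (hmem d).mp (by simp [habcd])
  refine ⟨i, fun j => ?_, ?_⟩
  · rw [← sq_le_sq, hi]
    exact hle _ ((hmem _).mpr ⟨j, rfl⟩)
  · have hsum : ((l : Multiset ℝ).map Real.sqrt).sum = ∑ j, |μ j| := by
      rw [hl, Multiset.map_map]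
      exact Finset.sum_congr rfl fun j _ => Real.sqrt_sq_eq_abs _
    have hd : Real.sqrt d = |μ i| := by rw [← hi, Real.sqrt_sq_eq_abs]
    rw [habcd] at hsum
    simp only [Multiset.map_coe, Multiset.sum_coe, List.map, List.sum_cons, List.sum_nil] at hsum
    simp only [concurrence, ← hl_def, habcd, List.getD_cons_succ, List.getD_cons_zero]
    rw [← hsum, ← hd]
    ring_nf

lemma concurrence_map_mul_transpose (V : Matrix (Fin 4) (Fin 4) ℝ) (μ : Fin 4 → ℝ)
    (h : ((Vᵀ * Jr * V) ^ 2).charpoly = ∏ i, (X - C (μ i ^ 2))) :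
    ∃ i, (∀ j, |μ j| ≤ |μ i|) ∧
      concurrence ((V * Vᵀ).map Complex.ofReal) = max 0 (2 * |μ i| - ∑ j, |μ j|) := by
  refine concurrence_eq_of_roots _ μ ?_
  rw [charpoly_mul_spinFlip_map_ofReal, h, Polynomial.map_prod]
  simp only [Polynomial.map_sub, Polynomial.map_X, Polynomial.map_C]
  rw [Polynomial.roots_prod _ _ (Finset.prod_ne_zero_iff.mpr fun i _ => X_sub_C_ne_zero _)]
  simp only [Function.comp_def, roots_X_sub_C, Multiset.bind_singleton, Multiset.map_map,
    Complex.ofRealHom_eq_coe, Complex.ofReal_re]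

section Ensemble

variable (ψ : Fin 4 → Fin 4 → ℝ) (p : Fin 4 → ℝ)

noncomputable def ensembleMatrix : Matrix (Fin 4) (Fin 4) ℝ :=
  (Matrix.of ψ)ᵀ * diagonal fun i => Real.sqrt (p i)

lemma ensembleMatrix_apply (a i : Fin 4) : ensembleMatrix ψ p a i = ψ i a * Real.sqrt (p i) := by
  simp [ensembleMatrix]

lemma sum_smul_pureState_eq (hp : 0 ≤ p) :
    ∑ i, p i • pureState (ψ i) =
      (ensembleMatrix ψ p * (ensembleMatrix ψ p)ᵀ).map Complex.ofReal := by
  ext a b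
  simp only [Matrix.sum_apply, Matrix.smul_apply, pureState, Matrix.map_apply, vecMulVec_apply,
    Matrix.mul_apply, Matrix.transpose_apply, ensembleMatrix_apply, Complex.ofReal_sum]
  refine Finset.sum_congr rfl fun i _ => ?_
  rw [Complex.real_smul, ← Complex.ofReal_mul]
  congr 1
  linear_combination (-(ψ i a * ψ i b)) * Real.mul_self_sqrt (hp i)

lemma ensembleMatrix_transpose_mul_Jr_mul_apply (i j : Fin 4) :
    ((ensembleMatrix ψ p)ᵀ * Jr * ensembleMatrix ψ p) i j =
      Real.sqrt (p i) * Real.sqrt (p j) * (ψ i ⬝ᵥ Jr *ᵥ ψ j) := by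
  simp only [Matrix.mul_apply, Matrix.transpose_apply, ensembleMatrix_apply, dotProduct,
    Matrix.mulVec, Finset.sum_mul, Finset.mul_sum]
  rw [Finset.sum_comm]
  refine Finset.sum_congr rfl fun k _ => Finset.sum_congr rfl fun l _ => ?_
  ring

lemma isHermitian_ensembleMatrix_transpose_mul_Jr_mul :
    ((ensembleMatrix ψ p)ᵀ * Jr * ensembleMatrix ψ p).IsHermitian := by
  rw [isHermitian_iff_isSymm, IsSymm, transpose_mul, transpose_mul, transpose_transpose,
    Jr_transpose, Matrix.mul_assoc]

lemma det_ensembleMatrix_transpose_mul_Jr_mul_pos (hind : LinearIndependent ℝ ψ)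
    (hp : ∀ i, 0 < p i) :
    0 < ((ensembleMatrix ψ p)ᵀ * Jr * ensembleMatrix ψ p).det := by
  have hV : (ensembleMatrix ψ p).det ≠ 0 := by
    rw [ensembleMatrix, det_mul, det_transpose, det_diagonal]
    refine mul_ne_zero ?_ (Finset.prod_ne_zero_iff.mpr fun i _ => (Real.sqrt_pos.mpr (hp i)).ne')
    exact ((Matrix.isUnit_iff_isUnit_det _).mp (linearIndependent_rows_iff_isUnit.mp hind)).ne_zero
  rw [det_mul, det_mul, det_transpose, det_Jr, mul_one]
  exact mul_self_pos.mpr hV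

end Ensemble

lemma concurrence_pureState (φ : Fin 4 → ℝ) : concurrence (pureState φ) = |φ ⬝ᵥ Jr *ᵥ φ| := by
  set e : Fin 4 → ℝ := Pi.single 0 1
  set V := ensembleMatrix (fun _ => φ) e
  have hρ : pureState φ = (V * Vᵀ).map Complex.ofReal := by
    rw [← sum_smul_pureState_eq _ _ (Pi.single_nonneg.mpr zero_le_one)]
    simp
  have hτ : Vᵀ * Jr * V = diagonal (Pi.single 0 (φ ⬝ᵥ Jr *ᵥ φ)) := by
    ext i j
    rw [ensembleMatrix_transpose_mul_Jr_mul_apply]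
    fin_cases i <;> fin_cases j <;> simp [e]
  obtain ⟨i, hmax, hconc⟩ := concurrence_map_mul_transpose V (Pi.single 0 (φ ⬝ᵥ Jr *ᵥ φ))
    (by rw [hτ, diagonal_pow, charpoly_diagonal]; rfl)
  rw [hρ, hconc, Fin.sum_univ_four]
  by_cases hi : i = 0
  · simp [hi, two_mul]
  · have hc : |φ ⬝ᵥ Jr *ᵥ φ| ≤ 0 := by simpa [hi] using hmax 0
    simp [abs_nonpos_iff.mp hc]

theorem rank_four_never_optimal_general
    (ψ : Fin 4 → Fin 4 → ℝ) (hind : LinearIndependent ℝ ψ)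
    (p : Fin 4 → ℝ) (hp : ∀ i, 0 < p i)
    (hent : 0 < ∑ i, p i * concurrence (pureState (ψ i))) :
    concurrence (∑ i, p i • pureState (ψ i)) <
      ∑ i, p i * concurrence (pureState (ψ i)) := by
  set V := ensembleMatrix ψ p
  have hτ : (Vᵀ * Jr * V).IsHermitian := isHermitian_ensembleMatrix_transpose_mul_Jr_mul ψ p
  set μ := hτ.eigenvalues
  obtain ⟨i, -, hconc⟩ := concurrence_map_mul_transpose V μ (by simpa using hτ.charpoly_pow 2)
  have hpure : ∑ i, p i * concurrence (pureState (ψ i)) = ∑ i, |(Vᵀ * Jr * V) i i| := by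
    refine Finset.sum_congr rfl fun i _ => ?_
    rw [concurrence_pureState, ensembleMatrix_transpose_mul_Jr_mul_apply,
      Real.mul_self_sqrt (hp i).le, abs_mul, abs_of_pos (hp i)]
  have htrace : |∑ i, μ i| ≤ ∑ i, |(Vᵀ * Jr * V) i i| := by
    simpa [trace] using (congrArg abs hτ.trace_eq_sum_eigenvalues).ge.trans
      (Finset.abs_sum_le_sum_abs _ _)
  have hdet : 0 < ∏ i, μ i := by
    have h := det_ensembleMatrix_transpose_mul_Jr_mul_pos ψ p hind hp
    rwa [hτ.det_eq_prod_eigenvalues] at h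
  rw [sum_smul_pureState_eq ψ p fun i => (hp i).le, hconc]
  refine max_lt hent ?_
  calc 2 * |μ i| - ∑ j, |μ j| < |∑ j, μ j| := two_mul_abs_sub_sum_abs_lt_abs_sum ⟨2, rfl⟩ hdet i
    _ ≤ ∑ j, |(Vᵀ * Jr * V) j j| := htrace
    _ = ∑ j, p j * concurrence (pureState (ψ j)) := hpure.symm

/-- Mixtures of four linearly independent real pure states, at least one of
which is entangled, are never optimal: the concurrence of the mixture is
strictly below the weighted sum of the pure-state concurrences. -/
theorem rank_four_never_optimal
    (ψ : Fin 4 → Fin 4 → ℝ) (hind : LinearIndependent ℝ ψ)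
    (hunit : ∀ i, ∑ j, ψ i j ^ 2 = 1)
    (p : Fin 4 → ℝ) (hp : ∀ i, 0 < p i) (hsum : ∑ i, p i = 1)
    (hent : 0 < ∑ i, p i * concurrence (pureState (ψ i))) :
    concurrence (∑ i, p i • pureState (ψ i)) <
      ∑ i, p i * concurrence (pureState (ψ i)) :=
  rank_four_never_optimal_general ψ hind p hp hent
end
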